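/- arXiv:1203.5136 — 2 statements merged into one kernel-verified Lean document; each statement's English description precedes it below -/
import Mathlib

section
/- Let g, h be Schwartz functions on ℝ² with |g(x)| ≤ C_N (1+|x|)^(-N) and |h(x)| ≤ C_N (1+|x|)^(-N) for all N. Let A = diag(4,2), B = [[1,1],[0,1]], and for a multi-index (j,ℓ,k) set g_{j,ℓ,k}(x) = 2^(3j/2) g(B^ℓ A^j x - k). Then for all N > 2 and all i ∈ {j-1, j, j+1} with i ≥ 0, j ≥ 0, |ℓ| ≤ 2^j, |m| ≤ 2^i, k, n ∈ ℤ², there exists a constant C_N > 0 (independent of j,ℓ,k,i,m,n,x) such that |(g_{j,ℓ,k} ∗ h_{i,m,n})(x)| ≤ C_N (1 + 2^j |x - A^(-i) B^(-m) n - A^(-j) B^(-ℓ) k|)^(-N) for all x ∈ ℝ². -/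
open MeasureTheory Metric Set Filter
noncomputable section

/-- `ℝ²` with the Euclidean norm. -/
abbrev V2 := EuclideanSpace ℝ (Fin 2)

/-- the vector `(a, b) ∈ ℝ²`. -/
def v2 (a b : ℝ) : V2 := (WithLp.equiv 2 (Fin 2 → ℝ)).symm ![a, b]

/-- The action of `B^ℓ A^j` on `ℝ²` for `A = diag(4,2)`, `B = [[1,1],[0,1]]`:
`x ↦ (2^(2j) x₁ + 2^j ℓ x₂, 2^j x₂)`. -/
def BA (j : ℕ) (ℓ : ℤ) (x : V2) : V2 :=
  v2 ((2:ℝ)^(2*j) * x 0 + (2:ℝ)^j * (ℓ:ℝ) * x 1) ((2:ℝ)^j * x 1)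

/-- The action of `A^(-j) B^(-ℓ)` on `ℝ²` (the inverse of `BA j ℓ`). -/
def invBA (j : ℕ) (ℓ : ℤ) (x : V2) : V2 :=
  v2 (((2:ℝ)^(2*j))⁻¹ * (x 0 - (ℓ:ℝ) * x 1)) (((2:ℝ)^j)⁻¹ * x 1)

/-- embedding of `ℤ²` into `ℝ²`. -/
def vi (k : ℤ × ℤ) : V2 := v2 (k.1 : ℝ) (k.2 : ℝ)

/-- `g_{j,ℓ,k}(x) = 2^(3j/2) g(B^ℓ A^j x - k)`. -/
def shemel (g : V2 → ℂ) (j : ℕ) (ℓ : ℤ) (k : ℤ × ℤ) (x : V2) : ℂ :=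
  ((2:ℝ) ^ (3*(j:ℝ)/2) : ℝ) * g (BA j ℓ x - vi k)

/-!
Substitute `u = B^ℓ A^j t - k` and `w = B^m A^i (x - t) - n` in the convolution integral. Then
`y := x - A^(-i) B^(-m) n - A^(-j) B^(-ℓ) k = A^(-j) B^(-ℓ) u + A^(-i) B^(-m) w`, and since
`|ℓ| ≤ 2^j`, `|m| ≤ 2^i` and `2^j ≤ 2 · 2^i`, the matrices `2^j A^(-j) B^(-ℓ)` and
`2^j A^(-i) B^(-m)` have norm at most `3` and `6`; hence `1 + 2^j |y| ≤ 6 (1 + |u|)(1 + |w|)`.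
With decay of order `N + 3` for `g` and `N` for `h`, the integrand is at most
`C 2^(3(i+j)/2) (1 + 2^j |y|)^(-N) (1 + |u|)^(-3)`. The change of variables `t ↦ u` has Jacobian
`2^(3j)` and `∫ (1 + |u|)^(-3) du < ∞` on `ℝ²`, so the powers of two combine to
`2^(3(i-j)/2) ≤ 2^(3/2)`.
-/

theorem Real.rpow_neg_le_of_le_mul {a b c N : ℝ} (ha : 0 < a) (hc : 0 < c) (hN : 0 ≤ N)
    (h : a ≤ c * b) : b ^ (-N) ≤ c ^ N * a ^ (-N) := by
  have hb : 0 < b := pos_of_mul_pos_right (ha.trans_le h) hc.le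
  calc b ^ (-N) = c ^ N * (c * b) ^ (-N) := by
        rw [Real.mul_rpow hc.le hb.le, ← mul_assoc, Real.rpow_neg hc.le,
          mul_inv_cancel₀ (Real.rpow_pos_of_pos hc N).ne', one_mul]
    _ ≤ c ^ N * a ^ (-N) :=
        mul_le_mul_of_nonneg_left (Real.rpow_le_rpow_of_nonpos ha h (neg_nonpos.2 hN))
          (by positivity)

theorem SchwartzMap.exists_norm_le_mul_one_add_norm_rpow_neg {E F : Type*} [NormedAddCommGroup E]
    [NormedSpace ℝ E] [NormedAddCommGroup F] [NormedSpace ℝ F] (f : SchwartzMap E F) (K : ℝ) :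
    ∃ C > 0, ∀ x, ‖f x‖ ≤ C * (1 + ‖x‖) ^ (-K) := by
  set k := ⌈K⌉₊
  set C := 2 ^ k * (Finset.Iic (k, 0)).sup (fun m => SchwartzMap.seminorm ℝ m.1 m.2) f
  refine ⟨C + 1, by positivity, fun x => ?_⟩
  have hx : 0 < 1 + ‖x‖ := by positivity
  have hdecay : (1 + ‖x‖) ^ k * ‖f x‖ ≤ C := by
    simpa using SchwartzMap.one_add_le_sup_seminorm_apply (𝕜 := ℝ) (m := (k, 0)) le_rfl le_rfl f x
  calc ‖f x‖ ≤ C * (1 + ‖x‖) ^ (-(k:ℝ)) := by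
        rw [Real.rpow_neg hx.le, Real.rpow_natCast, ← div_eq_mul_inv, le_div_iff₀ (by positivity)]
        linarith
    _ ≤ (C + 1) * (1 + ‖x‖) ^ (-K) := by
        gcongr
        · linarith
        · exact le_add_of_nonneg_right (norm_nonneg x)
        · exact Nat.le_ceil K

theorem MeasureTheory.Measure.lintegral_comp_linearMap_sub {E : Type*} [NormedAddCommGroup E]
    [NormedSpace ℝ E] [MeasurableSpace E] [BorelSpace E] [FiniteDimensional ℝ E] (μ : Measure E)
    [μ.IsAddHaarMeasure] {F : E → ENNReal} (hF : Measurable F) {f : E →ₗ[ℝ] E}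
    (hf : LinearMap.det f ≠ 0) (a : E) :
    ∫⁻ t, F (f t - a) ∂μ = ENNReal.ofReal |(LinearMap.det f)⁻¹| * ∫⁻ u, F u ∂μ := by
  have hfm : Measurable f := f.continuous_of_finiteDimensional.measurable
  calc ∫⁻ t, F (f t - a) ∂μ = ∫⁻ u, F (u - a) ∂(μ.map f) :=
        (lintegral_map (hF.comp (measurable_sub_const a)) hfm).symm
    _ = ENNReal.ofReal |(LinearMap.det f)⁻¹| * ∫⁻ u, F u ∂μ := by
        rw [Measure.map_linearMap_addHaar_eq_smul_addHaar μ hf, lintegral_smul_measure,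
          lintegral_sub_right_eq_self F a, smul_eq_mul]

theorem MeasureTheory.lintegral_one_add_norm_rpow_neg_toReal_pos {E : Type*} [NormedAddCommGroup E]
    [NormedSpace ℝ E] [FiniteDimensional ℝ E] [MeasurableSpace E] [BorelSpace E] (μ : Measure E)
    [μ.IsAddHaarMeasure] {r : ℝ} (hr : (Module.finrank ℝ E : ℝ) < r) :
    0 < (∫⁻ x, ENNReal.ofReal ((1 + ‖x‖) ^ (-r)) ∂μ).toReal := by
  refine ENNReal.toReal_pos (ne_of_gt ?_) (finite_integral_one_add_norm hr).ne
  rw [lintegral_pos_iff_support (by fun_prop)]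
  rw [Function.support_eq_univ fun x => by positivity]
  exact μ.measure_univ_pos.2 (NeZero.ne μ)

@[simp] lemma v2_apply_zero (a b : ℝ) : v2 a b 0 = a := rfl
@[simp] lemma v2_apply_one (a b : ℝ) : v2 a b 1 = b := rfl

lemma norm_le_abs_add_abs (x : V2) : ‖x‖ ≤ |x 0| + |x 1| := by
  rw [EuclideanSpace.norm_eq, Fin.sum_univ_two, Real.norm_eq_abs, Real.norm_eq_abs]
  exact Real.sqrt_le_iff.2 ⟨by positivity, by nlinarith [abs_nonneg (x 0), abs_nonneg (x 1)]⟩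

lemma abs_apply_le_norm (x : V2) (i : Fin 2) : |x i| ≤ ‖x‖ := PiLp.norm_apply_le x i

lemma invBA_BA (j : ℕ) (ℓ : ℤ) (t : V2) : invBA j ℓ (BA j ℓ t) = t := by
  ext i
  fin_cases i <;> simp [invBA, BA, pow_mul']
  field_simp
  ring

lemma invBA_sub (j : ℕ) (ℓ : ℤ) (a b : V2) : invBA j ℓ (a - b) = invBA j ℓ a - invBA j ℓ b := by
  ext i
  fin_cases i <;> simp [invBA] <;> ring

lemma two_pow_mul_norm_invBA_le {j : ℕ} {ℓ : ℤ} (hℓ : |(ℓ:ℝ)| ≤ 2 ^ j) (u : V2) :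
    2 ^ j * ‖invBA j ℓ u‖ ≤ 3 * ‖u‖ := by
  have hq : (1:ℝ) ≤ 2 ^ j := one_le_pow₀ one_le_two
  have h0 : |u 0 - ℓ * u 1| ≤ 2 ^ j * (|u 0| + |u 1|) := by
    calc |u 0 - ℓ * u 1| ≤ |u 0| + |(ℓ:ℝ)| * |u 1| := (abs_sub _ _).trans_eq (by rw [abs_mul])
      _ ≤ 2 ^ j * (|u 0| + |u 1|) := by nlinarith [abs_nonneg (u 0), abs_nonneg (u 1)]
  calc (2:ℝ) ^ j * ‖invBA j ℓ u‖ ≤ 2 ^ j * (|invBA j ℓ u 0| + |invBA j ℓ u 1|) := by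
        gcongr; exact norm_le_abs_add_abs _
    _ = |u 0 - ℓ * u 1| / 2 ^ j + |u 1| := by
        simp only [invBA, v2_apply_zero, v2_apply_one, pow_mul', abs_mul, abs_inv, abs_pow,
          abs_two]
        field_simp
    _ ≤ (|u 0| + |u 1|) + |u 1| := by gcongr; rwa [div_le_iff₀' (by positivity)]
    _ ≤ 3 * ‖u‖ := by linarith [abs_apply_le_norm u 0, abs_apply_le_norm u 1]

lemma sub_invBA_sub_invBA_eq (j i : ℕ) (ℓ m : ℤ) (a b x t : V2) :
    x - invBA i m b - invBA j ℓ a = invBA j ℓ (BA j ℓ t - a) + invBA i m (BA i m (x - t) - b) := by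
  rw [invBA_sub, invBA_sub, invBA_BA, invBA_BA]
  abel

lemma one_add_two_pow_mul_norm_invBA_add_le {j i : ℕ} {ℓ m : ℤ} (hℓ : |(ℓ:ℝ)| ≤ 2 ^ j)
    (hm : |(m:ℝ)| ≤ 2 ^ i) (hji : j ≤ i + 1) (u w : V2) :
    1 + 2 ^ j * ‖invBA j ℓ u + invBA i m w‖ ≤ 6 * ((1 + ‖u‖) * (1 + ‖w‖)) := by
  have hu := two_pow_mul_norm_invBA_le hℓ u
  have hw := two_pow_mul_norm_invBA_le hm w
  have hji' : (2:ℝ) ^ j ≤ 2 * 2 ^ i := by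
    rw [← pow_succ']; exact pow_le_pow_right₀ one_le_two hji
  calc 1 + 2 ^ j * ‖invBA j ℓ u + invBA i m w‖
      ≤ 1 + 2 ^ j * ‖invBA j ℓ u‖ + 2 ^ j * ‖invBA i m w‖ := by
        linarith [mul_le_mul_of_nonneg_left (norm_add_le (invBA j ℓ u) (invBA i m w))
          (by positivity : (0:ℝ) ≤ 2 ^ j)]
    _ ≤ 1 + 3 * ‖u‖ + 2 * (2 ^ i * ‖invBA i m w‖) := by
        linarith [mul_le_mul_of_nonneg_right hji' (norm_nonneg (invBA i m w))]
    _ ≤ 6 * ((1 + ‖u‖) * (1 + ‖w‖)) := by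
        nlinarith [norm_nonneg u, norm_nonneg w, mul_nonneg (norm_nonneg u) (norm_nonneg w)]

def shearDilation (j : ℕ) (ℓ : ℤ) : V2 →ₗ[ℝ] V2 :=
  Matrix.toEuclideanLin !![(2:ℝ) ^ (2 * j), 2 ^ j * ℓ; 0, 2 ^ j]

lemma coe_shearDilation (j : ℕ) (ℓ : ℤ) : ⇑(shearDilation j ℓ) = BA j ℓ := by
  ext x i
  fin_cases i <;> simp [shearDilation, BA, Matrix.mulVec, dotProduct, Fin.sum_univ_two]

lemma det_shearDilation (j : ℕ) (ℓ : ℤ) : LinearMap.det (shearDilation j ℓ) = 2 ^ (3 * j) := by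
  rw [shearDilation, Matrix.toEuclideanLin_eq_toLin_orthonormal, LinearMap.det_toLin,
    Matrix.det_fin_two_of]
  ring

lemma lintegral_one_add_norm_BA_sub_rpow (j : ℕ) (ℓ : ℤ) (a : V2) (r : ℝ) :
    ∫⁻ t, ENNReal.ofReal ((1 + ‖BA j ℓ t - a‖) ^ (-r)) =
      ENNReal.ofReal ((2 ^ (3 * j))⁻¹) * ∫⁻ u : V2, ENNReal.ofReal ((1 + ‖u‖) ^ (-r)) := by
  have hdet : LinearMap.det (shearDilation j ℓ) ≠ 0 := by rw [det_shearDilation]; positivity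
  have := Measure.lintegral_comp_linearMap_sub volume
    (F := fun u : V2 => ENNReal.ofReal ((1 + ‖u‖) ^ (-r))) (by fun_prop) hdet a
  rwa [coe_shearDilation, det_shearDilation, abs_of_pos (by positivity)] at this

lemma norm_shemel (f : V2 → ℂ) (j : ℕ) (ℓ : ℤ) (k : ℤ × ℤ) (x : V2) :
    ‖shemel f j ℓ k x‖ = 2 ^ (3 * (j:ℝ) / 2) * ‖f (BA j ℓ x - vi k)‖ := by
  rw [shemel, norm_mul, Complex.norm_real, Real.norm_of_nonneg (by positivity)]

lemma two_rpow_mul_two_rpow_mul_inv_le {j i : ℕ} (hij : i ≤ j + 1) :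
    (2:ℝ) ^ (3 * (j:ℝ) / 2) * 2 ^ (3 * (i:ℝ) / 2) * ((2:ℝ) ^ (3 * j))⁻¹ ≤ 2 ^ ((3:ℝ) / 2) := by
  rw [← Real.rpow_natCast, ← Real.rpow_neg zero_le_two, ← Real.rpow_add two_pos,
    ← Real.rpow_add two_pos]
  apply Real.rpow_le_rpow_of_exponent_le one_le_two
  have : (i:ℝ) ≤ j + 1 := by exact_mod_cast hij
  push_cast
  linarith

section Convolution

variable {g h : V2 → ℂ} {Cg Ch N : ℝ} {j i : ℕ} {ℓ m : ℤ}

lemma norm_shemel_mul_shemel_le (hN : 0 ≤ N) (hCg : 0 ≤ Cg) (hCh : 0 ≤ Ch)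
    (hg : ∀ u, ‖g u‖ ≤ Cg * (1 + ‖u‖) ^ (-(N + 3))) (hh : ∀ w, ‖h w‖ ≤ Ch * (1 + ‖w‖) ^ (-N))
    (hℓ : |(ℓ:ℝ)| ≤ 2 ^ j) (hm : |(m:ℝ)| ≤ 2 ^ i) (hji : j ≤ i + 1)
    (k n : ℤ × ℤ) (x t : V2) :
    ‖shemel g j ℓ k t * shemel h i m n (x - t)‖ ≤
      2 ^ (3 * (j:ℝ) / 2) * 2 ^ (3 * (i:ℝ) / 2) * (Cg * Ch * 6 ^ N *
        (1 + 2 ^ j * ‖x - invBA i m (vi n) - invBA j ℓ (vi k)‖) ^ (-N)) *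
        (1 + ‖BA j ℓ t - vi k‖) ^ (-3:ℝ) := by
  set u := BA j ℓ t - vi k
  set w := BA i m (x - t) - vi n
  have hu : 0 < 1 + ‖u‖ := by positivity
  have hw : 0 < 1 + ‖w‖ := by positivity
  have hpeetre : ((1 + ‖u‖) * (1 + ‖w‖)) ^ (-N) ≤
      6 ^ N * (1 + 2 ^ j * ‖x - invBA i m (vi n) - invBA j ℓ (vi k)‖) ^ (-N) := by
    refine Real.rpow_neg_le_of_le_mul (by positivity) (by norm_num) hN ?_
    rw [sub_invBA_sub_invBA_eq j i ℓ m (vi k) (vi n) x t]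
    exact one_add_two_pow_mul_norm_invBA_add_le hℓ hm hji u w
  have hgh : ‖g u‖ * ‖h w‖ ≤ Cg * Ch * ((1 + ‖u‖) * (1 + ‖w‖)) ^ (-N) * (1 + ‖u‖) ^ (-3:ℝ) :=
    calc ‖g u‖ * ‖h w‖ ≤ Cg * (1 + ‖u‖) ^ (-(N + 3)) * (Ch * (1 + ‖w‖) ^ (-N)) :=
          mul_le_mul (hg u) (hh w) (norm_nonneg _) (by positivity)
      _ = Cg * Ch * ((1 + ‖u‖) * (1 + ‖w‖)) ^ (-N) * (1 + ‖u‖) ^ (-3:ℝ) := by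
          rw [neg_add, Real.rpow_add hu, Real.mul_rpow hu.le hw.le]; ring
  rw [norm_mul, norm_shemel, norm_shemel]
  calc 2 ^ (3 * (j:ℝ) / 2) * ‖g u‖ * (2 ^ (3 * (i:ℝ) / 2) * ‖h w‖)
      = 2 ^ (3 * (j:ℝ) / 2) * 2 ^ (3 * (i:ℝ) / 2) * (‖g u‖ * ‖h w‖) := by ring
    _ ≤ 2 ^ (3 * (j:ℝ) / 2) * 2 ^ (3 * (i:ℝ) / 2) *
        (Cg * Ch * ((1 + ‖u‖) * (1 + ‖w‖)) ^ (-N)) * (1 + ‖u‖) ^ (-3:ℝ) := by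
        rw [mul_assoc _ (Cg * Ch * _)]; gcongr
    _ ≤ _ := by
        have : Cg * Ch * ((1 + ‖u‖) * (1 + ‖w‖)) ^ (-N) ≤ Cg * Ch * 6 ^ N *
            (1 + 2 ^ j * ‖x - invBA i m (vi n) - invBA j ℓ (vi k)‖) ^ (-N) := by
          rw [mul_assoc (Cg * Ch)]; gcongr
        gcongr

lemma norm_convolution_shemel_le (hN : 0 ≤ N) (hCg : 0 ≤ Cg) (hCh : 0 ≤ Ch)
    (hg : ∀ u, ‖g u‖ ≤ Cg * (1 + ‖u‖) ^ (-(N + 3))) (hh : ∀ w, ‖h w‖ ≤ Ch * (1 + ‖w‖) ^ (-N))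
    (hℓ : |(ℓ:ℝ)| ≤ 2 ^ j) (hm : |(m:ℝ)| ≤ 2 ^ i) (hji : j ≤ i + 1)
    (hij : i ≤ j + 1) (k n : ℤ × ℤ) (x : V2) :
    ‖convolution (shemel g j ℓ k) (shemel h i m n) (ContinuousLinearMap.mul ℂ ℂ) volume x‖ ≤
      2 ^ ((3:ℝ) / 2) * Cg * Ch * 6 ^ N *
        (∫⁻ u : V2, ENNReal.ofReal ((1 + ‖u‖) ^ (-3:ℝ))).toReal *
        (1 + 2 ^ j * ‖x - invBA i m (vi n) - invBA j ℓ (vi k)‖) ^ (-N) := by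
  set K := Cg * Ch * 6 ^ N * (1 + 2 ^ j * ‖x - invBA i m (vi n) - invBA j ℓ (vi k)‖) ^ (-N)
  set I := ∫⁻ u : V2, ENNReal.ofReal ((1 + ‖u‖) ^ (-3:ℝ))
  set S := (2:ℝ) ^ (3 * (j:ℝ) / 2) * 2 ^ (3 * (i:ℝ) / 2)
  have hI : I ≠ ⊤ := (finite_integral_one_add_norm (by norm_num)).ne
  have hlint : ∫⁻ t, ENNReal.ofReal ‖ContinuousLinearMap.mul ℂ ℂ (shemel g j ℓ k t)
        (shemel h i m n (x - t))‖ ≤ ENNReal.ofReal (S * K * ((2 ^ (3 * j))⁻¹ * I.toReal)) :=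
    calc _ ≤ ∫⁻ t, ENNReal.ofReal (S * K) * ENNReal.ofReal ((1 + ‖BA j ℓ t - vi k‖) ^ (-3:ℝ)) :=
          lintegral_mono fun t => by
            rw [← ENNReal.ofReal_mul (by positivity)]
            exact ENNReal.ofReal_le_ofReal
              (norm_shemel_mul_shemel_le hN hCg hCh hg hh hℓ hm hji k n x t)
      _ = ENNReal.ofReal (S * K) * (ENNReal.ofReal ((2 ^ (3 * j))⁻¹) * I) := by
          rw [lintegral_const_mul' _ _ ENNReal.ofReal_ne_top, lintegral_one_add_norm_BA_sub_rpow]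
      _ = _ := by
          rw [← ENNReal.ofReal_toReal hI, ← ENNReal.ofReal_mul (by positivity),
            ← ENNReal.ofReal_mul (by positivity), ENNReal.toReal_ofReal ENNReal.toReal_nonneg]
  rw [convolution_def]
  refine (norm_integral_le_lintegral_norm _).trans
    ((ENNReal.toReal_le_of_le_ofReal (by positivity) hlint).trans ?_)
  calc S * K * ((2 ^ (3 * j))⁻¹ * I.toReal) = S * (2 ^ (3 * j))⁻¹ * (K * I.toReal) := by ring
    _ ≤ 2 ^ ((3:ℝ) / 2) * (K * I.toReal) := by
        gcongr
        exact two_rpow_mul_two_rpow_mul_inv_le hij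
    _ = _ := by ring

end Convolution

/-- almost orthogonality of the shear anisotropic system:
for Schwartz `g, h`, `N > 2`, neighbouring scales `i ∈ {j-1,j,j+1}` and all shear and
translation parameters, `|(g_{j,ℓ,k} ∗ h_{i,m,n})(x)| ≤ C_N (1+2^j|x - x_Q - x_P|)^(-N)`. -/
theorem stmt3 (g h : SchwartzMap V2 ℂ) (N : ℝ) (hN : N > 2) :
    ∃ C > 0, ∀ (j i : ℕ) (ℓ m : ℤ) (k n : ℤ × ℤ),
      ((i:ℤ) = (j:ℤ) - 1 ∨ (i:ℤ) = (j:ℤ) ∨ (i:ℤ) = (j:ℤ) + 1) →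
      |ℓ| ≤ 2^j → |m| ≤ 2^i →
      ∀ x : V2,
        ‖convolution (shemel (fun y => g y) j ℓ k) (shemel (fun y => h y) i m n)
            (ContinuousLinearMap.mul ℂ ℂ) volume x‖ ≤
          C * (1 + (2:ℝ)^j * ‖x - invBA i m (vi n) - invBA j ℓ (vi k)‖) ^ (-N) := by
  obtain ⟨Cg, hCg, hg⟩ := g.exists_norm_le_mul_one_add_norm_rpow_neg (N + 3)
  obtain ⟨Ch, hCh, hh⟩ := h.exists_norm_le_mul_one_add_norm_rpow_neg N
  have hI_pos := lintegral_one_add_norm_rpow_neg_toReal_pos (volume : Measure V2)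
    (r := 3) (by norm_num)
  refine ⟨2 ^ ((3:ℝ) / 2) * Cg * Ch * 6 ^ N *
    (∫⁻ u : V2, ENNReal.ofReal ((1 + ‖u‖) ^ (-3:ℝ))).toReal, by positivity,
    fun j i ℓ m k n hij hℓ hm x => ?_⟩
  exact norm_convolution_shemel_le (by linarith) hCg.le hCh.le hg hh (by exact_mod_cast hℓ)
    (by exact_mod_cast hm) (by omega) (by omega) k n x
end
end

section
/- Let the regions E₁ = {y ∈ ℝ² : 2^j|x−y| ≤ 3}, E₂ = {y : 2^j|x−y| > 3, |y| ≤ |x|/2}, E₃ = {y : 2^j|x−y| > 3, |y| > |x|/2} for fixed x ∈ ℝ² and j ≥ 0. Then: (a) for y ∈ E₁, 1 + 2^j|x| ≤ 4(1 + 2^(2j)|y|); (b) for y ∈ E₃, 1 + 2^j|x| ≤ 2(1 + 2^(2j)|y|); (c) for y ∈ E₂ and any ℓ with |ℓ| ≤ 2^j, 8(1 + |B^ℓ A^j (x−y)|) ≥ 1 + 2^j|x|, where A = diag(4,2), B = [[1,1],[0,1]]. -/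
/-!
Parts (a) and (b) are the triangle inequality together with `2^j ≤ 2^(2j)`. For (c), `|y| ≤ |x|/2`
forces `|x| ≤ 2|x − y|`, and `B^ℓ A^j = 2^j · S` with `S(a, b) = (2^j a + ℓ b, b)`; since `|ℓ| ≤ 2^j`
one recovers `|a| ≤ |S₁| + |b|`, so `S` shrinks lengths by at most a factor `2` and
`|B^ℓ A^j z| ≥ 2^(j-1) |z|`.
-/

open MeasureTheory Metric Set Filter
noncomputable section

lemma norm_sq_V2 (z : V2) : ‖z‖ ^ 2 = z 0 ^ 2 + z 1 ^ 2 := by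
  simp [EuclideanSpace.norm_sq_eq, Fin.sum_univ_two]

lemma BA_eq_smul_v2 (j : ℕ) (ℓ : ℤ) (z : V2) :
    BA j ℓ z = (2:ℝ) ^ j • v2 ((2:ℝ) ^ j * z 0 + ℓ * z 1) (z 1) := by
  ext i
  fin_cases i
  · simp [BA, v2, pow_mul']
    ring
  · simp [BA, v2]

lemma sq_add_sq_le_four_mul_shear {M L : ℝ} (hM : 1 ≤ M) (hL : |L| ≤ M) (a b : ℝ) :
    a ^ 2 + b ^ 2 ≤ 4 * ((M * a + L * b) ^ 2 + b ^ 2) := by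
  set t := M * a + L * b
  have hMa : M * |a| ≤ M * (|t| + |b|) :=
    calc M * |a| = |t - L * b| := by
          rw [add_sub_cancel_right, abs_mul, abs_of_pos (by linarith : 0 < M)]
      _ ≤ |t| + |L| * |b| := by rw [← abs_mul]; exact abs_sub _ _
      _ ≤ M * |t| + M * |b| := by
        gcongr
        exact le_mul_of_one_le_left (abs_nonneg t) hM
      _ = M * (|t| + |b|) := by ring
  have ha : |a| ≤ |t| + |b| := le_of_mul_le_mul_left hMa (by linarith)
  nlinarith [sq_abs a, sq_abs t, sq_abs b, abs_nonneg a, sq_nonneg (|t| - |b|),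
    mul_self_le_mul_self (abs_nonneg a) ha]

lemma half_pow_mul_norm_le_norm_BA {j : ℕ} {ℓ : ℤ} (hℓ : |ℓ| ≤ 2 ^ j) (z : V2) :
    (2:ℝ) ^ j / 2 * ‖z‖ ≤ ‖BA j ℓ z‖ := by
  have hL : |(ℓ:ℝ)| ≤ 2 ^ j := by exact_mod_cast hℓ
  have hshear := sq_add_sq_le_four_mul_shear (one_le_pow₀ one_le_two) hL (z 0) (z 1)
  have hz : ‖z‖ ≤ 2 * ‖v2 ((2:ℝ) ^ j * z 0 + ℓ * z 1) (z 1)‖ := by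
    refine le_of_pow_le_pow_left₀ two_ne_zero (by positivity) ?_
    rw [mul_pow, norm_sq_V2, norm_sq_V2]
    norm_num [v2]
    linarith
  rw [BA_eq_smul_v2, norm_smul, Real.norm_of_nonneg (by positivity)]
  nlinarith [pow_pos (two_pos : (0:ℝ) < 2) j]

section

variable {E : Type*} [SeminormedAddCommGroup E] {M : ℝ} {x y : E}

lemma one_add_mul_norm_le_of_mul_norm_sub_le (hM : 1 ≤ M) (h : M * ‖x - y‖ ≤ 3) :
    1 + M * ‖x‖ ≤ 4 * (1 + M ^ 2 * ‖y‖) := by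
  have hMy : M * ‖y‖ ≤ M ^ 2 * ‖y‖ := by gcongr; nlinarith
  nlinarith [mul_le_mul_of_nonneg_left (norm_le_norm_sub_add x y) (by linarith : 0 ≤ M),
    mul_nonneg (sq_nonneg M) (norm_nonneg y)]

lemma one_add_mul_norm_le_of_half_norm_lt (hM : 1 ≤ M) (h : ‖x‖ / 2 < ‖y‖) :
    1 + M * ‖x‖ ≤ 2 * (1 + M ^ 2 * ‖y‖) := by
  have hMy : M * ‖y‖ ≤ M ^ 2 * ‖y‖ := by gcongr; nlinarith
  nlinarith [mul_le_mul_of_nonneg_left h.le (by linarith : 0 ≤ M)]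

lemma norm_le_two_mul_norm_sub_of_norm_le_half (h : ‖y‖ ≤ ‖x‖ / 2) :
    ‖x‖ ≤ 2 * ‖x - y‖ := by
  linarith [norm_le_norm_sub_add x y]

end

/-- the three elementary estimates on the regions `E₁, E₂, E₃`:
(a) if `2^j|x−y| ≤ 3` then `1 + 2^j|x| ≤ 4(1 + 2^(2j)|y|)`;
(b) if `2^j|x−y| > 3` and `|y| > |x|/2` then `1 + 2^j|x| ≤ 2(1 + 2^(2j)|y|)`;
(c) if `2^j|x−y| > 3`, `|y| ≤ |x|/2` and `|ℓ| ≤ 2^j` then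
    `8(1 + |B^ℓ A^j(x−y)|) ≥ 1 + 2^j|x|`. -/
theorem stmt17 (j : ℕ) (x y : V2) :
    ((2:ℝ)^j * ‖x - y‖ ≤ 3 → 1 + (2:ℝ)^j * ‖x‖ ≤ 4 * (1 + (2:ℝ)^(2*j) * ‖y‖)) ∧
      ((2:ℝ)^j * ‖x - y‖ > 3 → ‖y‖ > ‖x‖ / 2 →
        1 + (2:ℝ)^j * ‖x‖ ≤ 2 * (1 + (2:ℝ)^(2*j) * ‖y‖)) ∧
      ((2:ℝ)^j * ‖x - y‖ > 3 → ‖y‖ ≤ ‖x‖ / 2 → ∀ ℓ : ℤ, |ℓ| ≤ 2^j →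
        8 * (1 + ‖BA j ℓ (x - y)‖) ≥ 1 + (2:ℝ)^j * ‖x‖) := by
  have hM : (1:ℝ) ≤ 2 ^ j := one_le_pow₀ one_le_two
  rw [pow_mul']
  refine ⟨one_add_mul_norm_le_of_mul_norm_sub_le hM,
    fun _ ↦ one_add_mul_norm_le_of_half_norm_lt hM, fun _ hsmall ℓ hℓ ↦ ?_⟩
  have hx := mul_le_mul_of_nonneg_left (norm_le_two_mul_norm_sub_of_norm_le_half hsmall)
    (by linarith : (0:ℝ) ≤ 2 ^ j)
  linarith [half_pow_mul_norm_le_norm_BA hℓ (x - y)]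
end
end
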